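/- arXiv:2404.02752 — 3 statements merged into one kernel-verified Lean document; each statement's English description precedes it below -/
import Mathlib

section
/- Let ℰ be an abelian extension of 𝒜 by ℬ with section (𝔰,s) and induced 2-cocycle (ω,ϖ,χ), and let W: 𝔤(𝒜,ℬ) → ℋ²(𝒜,ℬ) be the Wells map W(d_𝒜,d_ℬ) = [Δ_{(d_𝒜,d_ℬ)}(ω,ϖ,χ)]. A pair (d_𝒜,d_ℬ) ∈ Der(𝒜) × End(ℬ) is inducible (i.e., lifts to a derivation of ℰ preserving ℬ and projecting to d_𝒜) if and only if (d_𝒜,d_ℬ) ∈ 𝔤(𝒜,ℬ) and W(d_𝒜,d_ℬ) = 0. -/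
universe u

section
variable (K : Type u) [Field K]

/-- A relative Rota-Baxter Lie algebra: a Lie algebra `A`, a representation `rep` of `A`
on `V`, and a relative Rota-Baxter operator `T : V → A`. -/
structure RelRB (A V : Type u) [AddCommGroup A] [Module K A]
    [AddCommGroup V] [Module K V] : Type u where
  br : A →ₗ[K] A →ₗ[K] A
  skew : ∀ x y, br x y + br y x = 0
  jacobi : ∀ x y z, br x (br y z) = br (br x y) z + br y (br x z)
  rep : A →ₗ[K] Module.End K V
  rep_br : ∀ x y, rep (br x y) = rep x * rep y - rep y * rep x
  T : V →ₗ[K] A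
  rb : ∀ u v, br (T u) (T v) = T (rep (T u) v - rep (T v) u)

variable {A V B M : Type u}
  [AddCommGroup A] [Module K A] [AddCommGroup V] [Module K V]
  [AddCommGroup B] [Module K B] [AddCommGroup M] [Module K M]

/-- A non-abelian extension of `𝒜` by `ℬ`: a relative Rota-Baxter Lie algebra `ℰ`
together with a short exact sequence `0 → ℬ → ℰ → 𝒜 → 0` of relative Rota-Baxter Lie
algebras. -/
structure ExtData {Ah Vh : Type u} [AddCommGroup Ah] [Module K Ah]
    [AddCommGroup Vh] [Module K Vh]
    (𝒜 : RelRB K A V) (ℬ : RelRB K B M) (ℰ : RelRB K Ah Vh) : Type u where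
  iB : B →ₗ[K] Ah
  iM : M →ₗ[K] Vh
  pA : Ah →ₗ[K] A
  pV : Vh →ₗ[K] V
  iB_br : ∀ a b, iB (ℬ.br a b) = ℰ.br (iB a) (iB b)
  iB_T : ∀ m, iB (ℬ.T m) = ℰ.T (iM m)
  i_rep : ∀ a m, iM (ℬ.rep a m) = ℰ.rep (iB a) (iM m)
  pA_br : ∀ x y, pA (ℰ.br x y) = 𝒜.br (pA x) (pA y)
  p_T : ∀ vh, pA (ℰ.T vh) = 𝒜.T (pV vh)
  p_rep : ∀ x vh, pV (ℰ.rep x vh) = 𝒜.rep (pA x) (pV vh)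
  iB_inj : Function.Injective iB
  iM_inj : Function.Injective iM
  pA_surj : Function.Surjective pA
  pV_surj : Function.Surjective pV
  exactA : ∀ x, pA x = 0 ↔ x ∈ Set.range iB
  exactV : ∀ v, pV v = 0 ↔ v ∈ Set.range iM
/-- The non-abelian 2-cocycle induced by a section `(sA, sV)` of a non-abelian extension:
`iB (ω x y) = [sA x, sA y] - sA [x,y]`, `iM (ϖ x v) = ρ̂(sA x)(sV v) - sV (ρ(x)v)`,
`iB (χ v) = T̂(sV v) - sA (T v)`, `iM (μ v a) = -ρ̂(iB a)(sV v)`,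
`iB (ρB x a) = [sA x, iB a]`, `iM (ρM x m) = ρ̂(sA x)(iM m)`. -/
def InducedCocycle {Ah Vh : Type u} [AddCommGroup Ah] [Module K Ah]
    [AddCommGroup Vh] [Module K Vh]
    {𝒜 : RelRB K A V} {ℬ : RelRB K B M} {ℰ : RelRB K Ah Vh}
    (E : ExtData K 𝒜 ℬ ℰ) (sA : A →ₗ[K] Ah) (sV : V →ₗ[K] Vh)
    (ω : A → A → B) (ϖ : A → V → M) (χ : V → B)
    (μ : V → B → M) (ρB : A → B → B) (ρM : A → M → M) : Prop :=
  (∀ x y, E.iB (ω x y) = ℰ.br (sA x) (sA y) - sA (𝒜.br x y)) ∧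
  (∀ x v, E.iM (ϖ x v) = ℰ.rep (sA x) (sV v) - sV (𝒜.rep x v)) ∧
  (∀ v, E.iB (χ v) = ℰ.T (sV v) - sA (𝒜.T v)) ∧
  (∀ v a, E.iM (μ v a) = - ℰ.rep (E.iB a) (sV v)) ∧
  (∀ x a, E.iB (ρB x a) = ℰ.br (sA x) (E.iB a)) ∧
  (∀ x m, E.iM (ρM x m) = ℰ.rep (sA x) (E.iM m))
/-- A derivation of a relative Rota-Baxter Lie algebra. -/
def IsDer (𝒜 : RelRB K A V) (dA : Module.End K A) (dV : Module.End K V) : Prop :=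
  (∀ x y, dA (𝒜.br x y) = 𝒜.br (dA x) y + 𝒜.br x (dA y)) ∧
  (∀ v, 𝒜.T (dV v) = dA (𝒜.T v)) ∧
  (∀ x v, dV (𝒜.rep x v) = 𝒜.rep x (dV v) + 𝒜.rep (dA x) v)

private lemma exists_retr {X Y Z : Type u} [AddCommGroup X] [Module K X]
    [AddCommGroup Y] [Module K Y] [AddCommGroup Z] [Module K Z]
    (i : X →ₗ[K] Y) (p : Y →ₗ[K] Z) (s : Z →ₗ[K] Y)
    (hi : Function.Injective i)
    (hex : ∀ y, p y = 0 ↔ y ∈ Set.range i)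
    (hs : ∀ z, p (s z) = z) :
    ∃ r : Y →ₗ[K] X, ∀ y, i (r y) = y - s (p y) := by
  have hmem : ∀ y : Y, ∃ x, i x = y - s (p y) := by
    intro y
    have h0 : p (y - s (p y)) = 0 := by simp [map_sub, hs]
    exact (hex _).mp h0
  choose r0 hr0 using hmem
  refine ⟨{ toFun := r0, map_add' := ?_, map_smul' := ?_ }, fun y => hr0 y⟩
  · intro y z
    apply hi
    simp only [map_add, hr0]
    abel
  · intro c y
    apply hi
    simp only [map_smul, hr0, RingHom.id_apply, smul_sub]

/-- for an abelian extension, a pair `(d_𝒜, d_ℬ) ∈ Der(𝒜) × End(ℬ)` is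
inducible (lifts to a derivation of `ℰ` preserving `ℬ` and projecting to `d_𝒜`) iff
`(d_𝒜,d_ℬ) ∈ 𝔤(𝒜,ℬ)` and its Wells class vanishes, i.e. `Δ_{(d_𝒜,d_ℬ)}(ω,ϖ,χ)` is a
2-coboundary. -/
theorem derivation_inducible_iff {Ah Vh : Type u}
    [AddCommGroup Ah] [Module K Ah] [AddCommGroup Vh] [Module K Vh]
    (𝒜 : RelRB K A V) (ℬ : RelRB K B M)
    (habr : ∀ a b, ℬ.br a b = 0) (habrep : ∀ (a : B) (m : M), ℬ.rep a m = 0)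
    (ℰ : RelRB K Ah Vh) (E : ExtData K 𝒜 ℬ ℰ)
    (sA : A →ₗ[K] Ah) (sV : V →ₗ[K] Vh)
    (hsA : ∀ x, E.pA (sA x) = x) (hsV : ∀ v, E.pV (sV v) = v)
    (ω : A → A → B) (ϖ : A → V → M) (χ : V → B)
    (μ : V → B → M) (ρB : A → B → B) (ρM : A → M → M)
    (hcoc : InducedCocycle K E sA sV ω ϖ χ μ ρB ρM)
    (dA : Module.End K A) (dV : Module.End K V)
    (hder : IsDer K 𝒜 dA dV)
    (dB : Module.End K B) (dM : Module.End K M) :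
    (∃ (dAh : Ah →ₗ[K] Ah) (dVh : Vh →ₗ[K] Vh),
      (∀ x y, dAh (ℰ.br x y) = ℰ.br (dAh x) y + ℰ.br x (dAh y)) ∧
      (∀ v, dAh (ℰ.T v) = ℰ.T (dVh v)) ∧
      (∀ x v, dVh (ℰ.rep x v) = ℰ.rep x (dVh v) + ℰ.rep (dAh x) v) ∧
      (∀ a, dAh (E.iB a) = E.iB (dB a)) ∧ (∀ m, dVh (E.iM m) = E.iM (dM m)) ∧
      (∀ xh, E.pA (dAh xh) = dA (E.pA xh)) ∧ (∀ vh, E.pV (dVh vh) = dV (E.pV vh))) ↔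
    (((∀ x m, dM (ρM x m) = ρM x (dM m) + ρM (dA x) m) ∧
      (∀ x a, dB (ρB x a) = ρB x (dB a) + ρB (dA x) a) ∧
      (∀ v a, dM (μ v a) = μ (dV v) a + μ v (dB a)) ∧
      (∀ m, dB (ℬ.T m) = ℬ.T (dM m))) ∧
     ∃ (φB : A →ₗ[K] B) (φM : V →ₗ[K] M),
      (∀ x y, dB (ω x y) - ω (dA x) y - ω x (dA y)
          = ρB x (φB y) - ρB y (φB x) - φB (𝒜.br x y)) ∧
      (∀ x v, dM (ϖ x v) - ϖ (dA x) v - ϖ x (dV v)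
          = - μ v (φB x) + ρM x (φM v) - φM (𝒜.rep x v)) ∧
      (∀ v, dB (χ v) - χ (dV v) = - φB (𝒜.T v) + ℬ.T (φM v))) := by
  obtain ⟨hω, hϖ, hχ, hμc, hρBc, hρMc⟩ := hcoc
  obtain ⟨hdbr, hdT, hdrep⟩ := hder
  obtain ⟨rB, hrB⟩ := exists_retr K E.iB E.pA sA E.iB_inj E.exactA hsA
  obtain ⟨rV, hrV⟩ := exists_retr K E.iM E.pV sV E.iM_inj E.exactV hsV
  have pAiB : ∀ a, E.pA (E.iB a) = 0 := fun a => (E.exactA _).mpr ⟨a, rfl⟩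
  have pViM : ∀ m, E.pV (E.iM m) = 0 := fun m => (E.exactV _).mpr ⟨m, rfl⟩
  have rBiB : ∀ a, rB (E.iB a) = a := by
    intro a; apply E.iB_inj; rw [hrB]; simp [pAiB]
  have rViM : ∀ m, rV (E.iM m) = m := by
    intro m; apply E.iM_inj; rw [hrV]; simp [pViM]
  have rBsA : ∀ x, rB (sA x) = 0 := by
    intro x; apply E.iB_inj; rw [hrB]; simp [hsA]
  have rVsV : ∀ v, rV (sV v) = 0 := by
    intro v; apply E.iM_inj; rw [hrV]; simp [hsV]
  have brii : ∀ a b, ℰ.br (E.iB a) (E.iB b) = 0 := fun a b => by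
    rw [← E.iB_br, habr, map_zero]
  have repii : ∀ a m, ℰ.rep (E.iB a) (E.iM m) = 0 := fun a m => by
    rw [← E.i_rep, habrep, map_zero]
  have biS : ∀ (a : B) (x : A), ℰ.br (E.iB a) (sA x) = - ℰ.br (sA x) (E.iB a) :=
    fun a x => eq_neg_of_add_eq_zero_left (ℰ.skew _ _)
  constructor
  · rintro ⟨dAh, dVh, hDbr, hDT, hDrep, hDiB, hDiM, hDpA, hDpV⟩
    have hφB : ∀ x, E.iB ((rB ∘ₗ dAh ∘ₗ sA) x) = dAh (sA x) - sA (dA x) := by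
      intro x
      rw [LinearMap.comp_apply, LinearMap.comp_apply, hrB, hDpA, hsA]
    have hφM : ∀ v, E.iM ((rV ∘ₗ dVh ∘ₗ sV) v) = dVh (sV v) - sV (dV v) := by
      intro v
      rw [LinearMap.comp_apply, LinearMap.comp_apply, hrV, hDpV, hsV]
    have hdAhsA : ∀ x, dAh (sA x) = sA (dA x) + E.iB ((rB ∘ₗ dAh ∘ₗ sA) x) := by
      intro x; rw [hφB]; abel
    have hdVhsV : ∀ v, dVh (sV v) = sV (dV v) + E.iM ((rV ∘ₗ dVh ∘ₗ sV) v) := by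
      intro v; rw [hφM]; abel
    have hDiB' : ∀ a, E.iB (dB a) = dAh (E.iB a) := fun a => (hDiB a).symm
    have hDiM' : ∀ m, E.iM (dM m) = dVh (E.iM m) := fun m => (hDiM m).symm
    refine ⟨⟨?_, ?_, ?_, ?_⟩, rB ∘ₗ dAh ∘ₗ sA, rV ∘ₗ dVh ∘ₗ sV, ?_, ?_, ?_⟩
    · intro x m
      apply E.iM_inj
      simp only [map_add, map_sub, map_neg, hDiB', hDiM', hρBc, hρMc, hμc, hω, hϖ, hχ,
        E.iB_T, hDbr, hDT, hDrep, hdAhsA, hdVhsV, hdbr, hdT, hdrep, brii, repii, biS,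
        LinearMap.add_apply, LinearMap.sub_apply, LinearMap.neg_apply, LinearMap.zero_apply]
      abel
    · intro x a
      apply E.iB_inj
      simp only [map_add, map_sub, map_neg, hDiB', hDiM', hρBc, hρMc, hμc, hω, hϖ, hχ,
        E.iB_T, hDbr, hDT, hDrep, hdAhsA, hdVhsV, hdbr, hdT, hdrep, brii, repii, biS,
        LinearMap.add_apply, LinearMap.sub_apply, LinearMap.neg_apply, LinearMap.zero_apply]
      abel
    · intro v a
      apply E.iM_inj
      simp only [map_add, map_sub, map_neg, hDiB', hDiM', hρBc, hρMc, hμc, hω, hϖ, hχ,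
        E.iB_T, hDbr, hDT, hDrep, hdAhsA, hdVhsV, hdbr, hdT, hdrep, brii, repii, biS,
        LinearMap.add_apply, LinearMap.sub_apply, LinearMap.neg_apply, LinearMap.zero_apply]
      abel
    · intro m
      apply E.iB_inj
      simp only [map_add, map_sub, map_neg, hDiB', hDiM', hρBc, hρMc, hμc, hω, hϖ, hχ,
        E.iB_T, hDbr, hDT, hDrep, hdAhsA, hdVhsV, hdbr, hdT, hdrep, brii, repii, biS,
        LinearMap.add_apply, LinearMap.sub_apply, LinearMap.neg_apply, LinearMap.zero_apply]
    · intro x y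
      apply E.iB_inj
      simp only [map_add, map_sub, map_neg, hDiB', hDiM', hρBc, hρMc, hμc, hω, hϖ, hχ,
        E.iB_T, hDbr, hDT, hDrep, hdAhsA, hdVhsV, hdbr, hdT, hdrep, brii, repii, biS,
        LinearMap.add_apply, LinearMap.sub_apply, LinearMap.neg_apply, LinearMap.zero_apply]
      abel
    · intro x v
      apply E.iM_inj
      simp only [map_add, map_sub, map_neg, hDiB', hDiM', hρBc, hρMc, hμc, hω, hϖ, hχ,
        E.iB_T, hDbr, hDT, hDrep, hdAhsA, hdVhsV, hdbr, hdT, hdrep, brii, repii, biS,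
        LinearMap.add_apply, LinearMap.sub_apply, LinearMap.neg_apply, LinearMap.zero_apply]
      abel
    · intro v
      apply E.iB_inj
      simp only [map_add, map_sub, map_neg, hDiB', hDiM', hρBc, hρMc, hμc, hω, hϖ, hχ,
        E.iB_T, hDbr, hDT, hDrep, hdAhsA, hdVhsV, hdbr, hdT, hdrep, brii, repii, biS,
        LinearMap.add_apply, LinearMap.sub_apply, LinearMap.neg_apply, LinearMap.zero_apply]
      abel
  · rintro ⟨⟨c1, c2, c3, c4⟩, φB, φM, e1, e2, e3⟩
    have e1' : ∀ x y, dB (ω x y) =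
        ρB x (φB y) - ρB y (φB x) - φB (𝒜.br x y) + (ω x (dA y) + ω (dA x) y) := by
      intro x y
      have h := e1 x y
      rw [sub_sub, sub_eq_iff_eq_add] at h
      rw [h]; abel
    have e2' : ∀ x v, dM (ϖ x v) =
        - μ v (φB x) + ρM x (φM v) - φM (𝒜.rep x v) + (ϖ x (dV v) + ϖ (dA x) v) := by
      intro x v
      have h := e2 x v
      rw [sub_sub, sub_eq_iff_eq_add] at h
      rw [h]; abel
    have e3' : ∀ v, dB (χ v) = - φB (𝒜.T v) + ℬ.T (φM v) + χ (dV v) := by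
      intro v
      have h := e3 v
      rw [sub_eq_iff_eq_add] at h
      rw [h]
    have hω' : ∀ x y, ℰ.br (sA x) (sA y) = E.iB (ω x y) + sA (𝒜.br x y) := by
      intro x y; rw [hω]; abel
    have hϖ' : ∀ x v, ℰ.rep (sA x) (sV v) = E.iM (ϖ x v) + sV (𝒜.rep x v) := by
      intro x v; rw [hϖ]; abel
    have hχ' : ∀ v, ℰ.T (sV v) = E.iB (χ v) + sA (𝒜.T v) := by
      intro v; rw [hχ]; abel
    have hρB' : ∀ x a, ℰ.br (sA x) (E.iB a) = E.iB (ρB x a) := fun x a => (hρBc x a).symm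
    have hρM' : ∀ x m, ℰ.rep (sA x) (E.iM m) = E.iM (ρM x m) := fun x m => (hρMc x m).symm
    have hμ' : ∀ v a, ℰ.rep (E.iB a) (sV v) = - E.iM (μ v a) := by
      intro v a; rw [hμc, neg_neg]
    have hbiS' : ∀ a x, ℰ.br (E.iB a) (sA x) = - E.iB (ρB x a) := by
      intro a x; rw [biS, hρB']
    have hTi : ∀ m, ℰ.T (E.iM m) = E.iB (ℬ.T m) := fun m => (E.iB_T m).symm
    set dAh : Ah →ₗ[K] Ah :=
      sA ∘ₗ dA ∘ₗ E.pA + E.iB ∘ₗ φB ∘ₗ E.pA + E.iB ∘ₗ dB ∘ₗ rB with hdAhdef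
    set dVh : Vh →ₗ[K] Vh :=
      sV ∘ₗ dV ∘ₗ E.pV + E.iM ∘ₗ φM ∘ₗ E.pV + E.iM ∘ₗ dM ∘ₗ rV with hdVhdef
    have dAh_apply : ∀ y, dAh y =
        sA (dA (E.pA y)) + E.iB (φB (E.pA y)) + E.iB (dB (rB y)) := fun y => rfl
    have dVh_apply : ∀ v, dVh v =
        sV (dV (E.pV v)) + E.iM (φM (E.pV v)) + E.iM (dM (rV v)) := fun v => rfl
    have hdec : ∀ y : Ah, sA (E.pA y) + E.iB (rB y) = y := by
      intro y; rw [hrB]; abel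
    have hdecV : ∀ v : Vh, sV (E.pV v) + E.iM (rV v) = v := by
      intro v; rw [hrV]; abel
    refine ⟨dAh, dVh, ?_, ?_, ?_, ?_, ?_, ?_, ?_⟩
    · intro x y
      have key : ∀ (x' y' : A) (a b : B),
          dAh (ℰ.br (sA x' + E.iB a) (sA y' + E.iB b)) =
          ℰ.br (dAh (sA x' + E.iB a)) (sA y' + E.iB b) +
            ℰ.br (sA x' + E.iB a) (dAh (sA y' + E.iB b)) := by
        intro x' y' a b
        simp only [map_add, map_sub, map_neg, LinearMap.add_apply, LinearMap.sub_apply,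
          LinearMap.neg_apply, dAh_apply, hω', hρB', hbiS', brii, repii, hχ', hϖ', hρM',
          hμ', hTi, pAiB, hsA, rBiB, rBsA, map_zero, LinearMap.zero_apply, add_zero,
          zero_add, e1', e2', e3', c1, c2, c3, c4, hdbr, hdT, hdrep, neg_neg]
        abel
      have h := key (E.pA x) (E.pA y) (rB x) (rB y)
      rwa [hdec x, hdec y] at h
    · intro v
      have key : ∀ (v' : V) (m : M),
          dAh (ℰ.T (sV v' + E.iM m)) = ℰ.T (dVh (sV v' + E.iM m)) := by
        intro v' m
        simp only [map_add, map_sub, map_neg, LinearMap.add_apply, LinearMap.sub_apply,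
          LinearMap.neg_apply, dAh_apply, dVh_apply, hω', hρB', hbiS', brii, repii, hχ',
          hϖ', hρM', hμ', hTi, pAiB, pViM, hsA, hsV, rBiB, rBsA, rViM, rVsV, map_zero,
          LinearMap.zero_apply, add_zero, zero_add, e1', e2', e3', c1, c2, c3, c4, hdbr,
          hdT, hdrep, neg_neg]
        abel
      have h := key (E.pV v) (rV v)
      rwa [hdecV v] at h
    · intro x v
      have key : ∀ (x' : A) (a : B) (v' : V) (m : M),
          dVh (ℰ.rep (sA x' + E.iB a) (sV v' + E.iM m)) =
          ℰ.rep (sA x' + E.iB a) (dVh (sV v' + E.iM m)) +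
            ℰ.rep (dAh (sA x' + E.iB a)) (sV v' + E.iM m) := by
        intro x' a v' m
        simp only [map_add, map_sub, map_neg, LinearMap.add_apply, LinearMap.sub_apply,
          LinearMap.neg_apply, dAh_apply, dVh_apply, hω', hρB', hbiS', brii, repii, hχ',
          hϖ', hρM', hμ', hTi, pAiB, pViM, hsA, hsV, rBiB, rBsA, rViM, rVsV, map_zero,
          LinearMap.zero_apply, add_zero, zero_add, e1', e2', e3', c1, c2, c3, c4, hdbr,
          hdT, hdrep, neg_neg]
        abel
      have h := key (E.pA x) (rB x) (E.pV v) (rV v)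
      rwa [hdec x, hdecV v] at h
    · intro a
      simp only [dAh_apply, pAiB, rBiB, map_zero, zero_add, add_zero]
    · intro m
      simp only [dVh_apply, pViM, rViM, map_zero, zero_add, add_zero]
    · intro xh
      simp only [dAh_apply, map_add, pAiB, hsA, add_zero]
    · intro vh
      simp only [dVh_apply, map_add, pViM, hsV, add_zero]

end
end

section
/- Let ℰ be an abelian extension of 𝒜 by ℬ and 𝛤: Der_ℬ(ℰ) → 𝔤(𝒜,ℬ) the map d_ℰ ↦ ((𝔭d_Â𝔰, pd_V̂s), (d_Â|_B, d_V̂|_M)). Then: (i) 𝛤 is a well-defined Lie algebra homomorphism independent of the choice of section; (ii) Ker 𝛤 ≅ 𝒵¹(𝒜,ℬ) as vector spaces; (iii) Im 𝛤 = Ker W, where W: 𝔤(𝒜,ℬ) → ℋ²(𝒜,ℬ) is the Wells map. Consequently there is an exact sequence 0 → 𝒵¹(𝒜,ℬ) → Der_ℬ(ℰ) →^𝛤 𝔤(𝒜,ℬ) →^W ℋ²(𝒜,ℬ). -/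
universe u

section
variable (K : Type u) [Field K]

variable {A V B M : Type u}
  [AddCommGroup A] [Module K A] [AddCommGroup V] [Module K V]
  [AddCommGroup B] [Module K B] [AddCommGroup M] [Module K M]

/-- A derivation of `ℰ` preserving `ℬ` (an element of `Der_ℬ(ℰ)`). -/
def InDerB {Ah Vh : Type u} [AddCommGroup Ah] [Module K Ah]
    [AddCommGroup Vh] [Module K Vh]
    {𝒜 : RelRB K A V} {ℬ : RelRB K B M} {ℰ : RelRB K Ah Vh}
    (E : ExtData K 𝒜 ℬ ℰ) (dAh : Ah →ₗ[K] Ah) (dVh : Vh →ₗ[K] Vh) : Prop :=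
  (∀ x y, dAh (ℰ.br x y) = ℰ.br (dAh x) y + ℰ.br x (dAh y)) ∧
  (∀ v, dAh (ℰ.T v) = ℰ.T (dVh v)) ∧
  (∀ x v, dVh (ℰ.rep x v) = ℰ.rep x (dVh v) + ℰ.rep (dAh x) v) ∧
  (∀ a, dAh (E.iB a) ∈ Set.range E.iB) ∧
  (∀ m, dVh (E.iM m) ∈ Set.range E.iM)

/-- The quadruple `(dA,dV,dB,dM)` is the image of `(dAh,dVh)` under `𝛤`. -/
def DerRestr {Ah Vh : Type u} [AddCommGroup Ah] [Module K Ah]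
    [AddCommGroup Vh] [Module K Vh]
    {𝒜 : RelRB K A V} {ℬ : RelRB K B M} {ℰ : RelRB K Ah Vh}
    (E : ExtData K 𝒜 ℬ ℰ) (sA : A →ₗ[K] Ah) (sV : V →ₗ[K] Vh)
    (dAh : Ah →ₗ[K] Ah) (dVh : Vh →ₗ[K] Vh)
    (dA : Module.End K A) (dV : Module.End K V)
    (dB : Module.End K B) (dM : Module.End K M) : Prop :=
  (∀ x, E.pA (dAh (sA x)) = dA x) ∧ (∀ v, E.pV (dVh (sV v)) = dV v) ∧
  (∀ a, dAh (E.iB a) = E.iB (dB a)) ∧ (∀ m, dVh (E.iM m) = E.iM (dM m))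

/-- 1-cocycles of `𝒜` with coefficients in the representation `(ρB, ρM, μ)`. -/
def IsZ1 (𝒜 : RelRB K A V) (ℬ : RelRB K B M)
    (μ : V → B → M) (ρB : A → B → B) (ρM : A → M → M)
    (φB : A → B) (φM : V → M) : Prop :=
  (∀ x y, ρB x (φB y) - ρB y (φB x) = φB (𝒜.br x y)) ∧
  (∀ x v, μ v (φB x) + φM (𝒜.rep x v) = ρM x (φM v)) ∧
  (∀ v, φB (𝒜.T v) = ℬ.T (φM v))

/-- properties of `𝛤 : Der_ℬ(ℰ) → 𝔤(𝒜,ℬ)` for an abelian extension: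
it is a well-defined Lie algebra homomorphism independent of the section, its kernel is
isomorphic to `𝒵¹(𝒜,ℬ)` and its image is the kernel of the Wells map, giving the exact
sequence `0 → 𝒵¹(𝒜,ℬ) → Der_ℬ(ℰ) → 𝔤(𝒜,ℬ) → ℋ²(𝒜,ℬ)`. -/
theorem gamma_exact_sequence {Ah Vh : Type u}
    [AddCommGroup Ah] [Module K Ah] [AddCommGroup Vh] [Module K Vh]
    (𝒜 : RelRB K A V) (ℬ : RelRB K B M)
    (habr : ∀ a b, ℬ.br a b = 0) (habrep : ∀ (a : B) (m : M), ℬ.rep a m = 0)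
    (ℰ : RelRB K Ah Vh) (E : ExtData K 𝒜 ℬ ℰ)
    (sA : A →ₗ[K] Ah) (sV : V →ₗ[K] Vh)
    (hsA : ∀ x, E.pA (sA x) = x) (hsV : ∀ v, E.pV (sV v) = v)
    (ω : A → A → B) (ϖ : A → V → M) (χ : V → B)
    (μ : V → B → M) (ρB : A → B → B) (ρM : A → M → M)
    (hcoc : InducedCocycle K E sA sV ω ϖ χ μ ρB ρM) :
    -- (i) 𝛤 is well defined, independent of the section, with values in 𝔤(𝒜,ℬ)
    (∀ dAh dVh, InDerB K E dAh dVh →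
      ∀ dA dV dB dM, DerRestr K E sA sV dAh dVh dA dV dB dM →
        (IsDer K 𝒜 dA dV ∧
         (∀ x m, dM (ρM x m) = ρM x (dM m) + ρM (dA x) m) ∧
         (∀ x a, dB (ρB x a) = ρB x (dB a) + ρB (dA x) a) ∧
         (∀ v a, dM (μ v a) = μ (dV v) a + μ v (dB a)) ∧
         (∀ m, dB (ℬ.T m) = ℬ.T (dM m))) ∧
        (∀ (sA' : A →ₗ[K] Ah) (sV' : V →ₗ[K] Vh),
          (∀ x, E.pA (sA' x) = x) → (∀ v, E.pV (sV' v) = v) →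
          (∀ x, E.pA (dAh (sA x)) = E.pA (dAh (sA' x))) ∧
          (∀ v, E.pV (dVh (sV v)) = E.pV (dVh (sV' v))))) ∧
    -- (i') 𝛤 is a Lie algebra homomorphism
    (∀ dAh dVh dAh' dVh', InDerB K E dAh dVh → InDerB K E dAh' dVh' →
      ∀ dA dV dB dM dA' dV' dB' dM',
        DerRestr K E sA sV dAh dVh dA dV dB dM →
        DerRestr K E sA sV dAh' dVh' dA' dV' dB' dM' →
        DerRestr K E sA sV (dAh ∘ₗ dAh' - dAh' ∘ₗ dAh) (dVh ∘ₗ dVh' - dVh' ∘ₗ dVh)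
          (dA * dA' - dA' * dA) (dV * dV' - dV' * dV)
          (dB * dB' - dB' * dB) (dM * dM' - dM' * dM)) ∧
    -- (ii) Ker 𝛤 ≅ 𝒵¹(𝒜,ℬ)
    ((∀ dAh dVh, InDerB K E dAh dVh →
      DerRestr K E sA sV dAh dVh 0 0 0 0 →
      ∀ (φB : A →ₗ[K] B) (φM : V →ₗ[K] M),
        (∀ x, E.iB (φB x) = dAh (sA x)) → (∀ v, E.iM (φM v) = dVh (sV v)) →
        IsZ1 K 𝒜 ℬ μ ρB ρM (fun x => φB x) (fun v => φM v)) ∧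
     (∀ dAh dVh dAh' dVh', InDerB K E dAh dVh → InDerB K E dAh' dVh' →
      DerRestr K E sA sV dAh dVh 0 0 0 0 → DerRestr K E sA sV dAh' dVh' 0 0 0 0 →
      (∀ x, dAh (sA x) = dAh' (sA x)) → (∀ v, dVh (sV v) = dVh' (sV v)) →
      dAh = dAh' ∧ dVh = dVh') ∧
     (∀ (φB : A →ₗ[K] B) (φM : V →ₗ[K] M),
      IsZ1 K 𝒜 ℬ μ ρB ρM (fun x => φB x) (fun v => φM v) →
      ∃ dAh dVh, InDerB K E dAh dVh ∧ DerRestr K E sA sV dAh dVh 0 0 0 0 ∧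
        (∀ x, E.iB (φB x) = dAh (sA x)) ∧ (∀ v, E.iM (φM v) = dVh (sV v)))) ∧
    -- (iii) Im 𝛤 = Ker W
    (∀ dA dV dB dM,
      (IsDer K 𝒜 dA dV ∧
       (∀ x m, dM (ρM x m) = ρM x (dM m) + ρM (dA x) m) ∧
       (∀ x a, dB (ρB x a) = ρB x (dB a) + ρB (dA x) a) ∧
       (∀ v a, dM (μ v a) = μ (dV v) a + μ v (dB a)) ∧
       (∀ m, dB (ℬ.T m) = ℬ.T (dM m))) →
      ((∃ dAh dVh, InDerB K E dAh dVh ∧ DerRestr K E sA sV dAh dVh dA dV dB dM) ↔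
       ∃ (φB : A →ₗ[K] B) (φM : V →ₗ[K] M),
        (∀ x y, dB (ω x y) - ω (dA x) y - ω x (dA y)
            = ρB x (φB y) - ρB y (φB x) - φB (𝒜.br x y)) ∧
        (∀ x v, dM (ϖ x v) - ϖ (dA x) v - ϖ x (dV v)
            = - μ v (φB x) + ρM x (φM v) - φM (𝒜.rep x v)) ∧
        (∀ v, dB (χ v) - χ (dV v) = - φB (𝒜.T v) + ℬ.T (φM v)))) := by
  classical
  obtain ⟨hω, hϖ, hχ, hμ, hρB, hρM⟩ := hcoc
  -- basic consequences of exactness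
  have hpAiB : ∀ b, E.pA (E.iB b) = 0 := fun b => (E.exactA _).mpr ⟨b, rfl⟩
  have hpViM : ∀ m, E.pV (E.iM m) = 0 := fun m => (E.exactV _).mpr ⟨m, rfl⟩
  have hbr_bb : ∀ a b, ℰ.br (E.iB a) (E.iB b) = 0 := fun a b => by
    rw [← E.iB_br, habr, map_zero]
  have hrep_bm : ∀ a m, ℰ.rep (E.iB a) (E.iM m) = 0 := fun a m => by
    rw [← E.i_rep, habrep, map_zero]
  have hskew : ∀ x y : Ah, ℰ.br x y = - ℰ.br y x := fun x y => eq_neg_of_add_eq_zero_left (ℰ.skew x y)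
  -- decompositions
  have hdecA : ∀ x : Ah, ∃ p b, x = sA p + E.iB b ∧ E.pA x = p := by
    intro x
    have h : E.pA (x - sA (E.pA x)) = 0 := by simp [map_sub, hsA]
    obtain ⟨b, hb⟩ := (E.exactA _).mp h
    exact ⟨E.pA x, b, by rw [hb]; abel, rfl⟩
  have hdecV : ∀ v : Vh, ∃ q m, v = sV q + E.iM m ∧ E.pV v = q := by
    intro v
    have h : E.pV (v - sV (E.pV v)) = 0 := by simp [map_sub, hsV]
    obtain ⟨m, hm⟩ := (E.exactV _).mp h
    exact ⟨E.pV v, m, by rw [hm]; abel, rfl⟩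
  -- normal forms for structure maps on atoms
  have hbr_ss : ∀ p q, ℰ.br (sA p) (sA q) = sA (𝒜.br p q) + E.iB (ω p q) := fun p q => by
    rw [hω]; abel
  have hbr_sb : ∀ p c, ℰ.br (sA p) (E.iB c) = E.iB (ρB p c) := fun p c => (hρB p c).symm
  have hbr_bs : ∀ b q, ℰ.br (E.iB b) (sA q) = - E.iB (ρB q b) := fun b q => by
    rw [hskew, hρB]
  have hrep_sv : ∀ p q, ℰ.rep (sA p) (sV q) = sV (𝒜.rep p q) + E.iM (ϖ p q) := fun p q => by
    rw [hϖ]; abel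
  have hrep_sm : ∀ p m, ℰ.rep (sA p) (E.iM m) = E.iM (ρM p m) := fun p m => (hρM p m).symm
  have hrep_bv : ∀ b q, ℰ.rep (E.iB b) (sV q) = - E.iM (μ q b) := fun b q => by
    rw [hμ]; abel
  have hT_s : ∀ q, ℰ.T (sV q) = sA (𝒜.T q) + E.iB (χ q) := fun q => by
    rw [hχ]; abel
  have hT_m : ∀ m, ℰ.T (E.iM m) = E.iB (ℬ.T m) := fun m => (E.iB_T m).symm
  -- a retraction of iB and iM
  obtain ⟨rB, hrB⟩ := E.iB.exists_leftInverse_of_injective (LinearMap.ker_eq_bot.mpr E.iB_inj)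
  obtain ⟨rV, hrV⟩ := E.iM.exists_leftInverse_of_injective (LinearMap.ker_eq_bot.mpr E.iM_inj)
  have hrBiB : ∀ b, rB (E.iB b) = b := fun b => LinearMap.congr_fun hrB b
  have hrViM : ∀ m, rV (E.iM m) = m := fun m => LinearMap.congr_fun hrV m
  have hiBrB : ∀ x : Ah, E.pA x = 0 → E.iB (rB x) = x := by
    intro x hx
    obtain ⟨b, hb⟩ := (E.exactA _).mp hx
    rw [← hb, hrBiB]
  have hiMrV : ∀ v : Vh, E.pV v = 0 → E.iM (rV v) = v := by
    intro v hv
    obtain ⟨m, hm⟩ := (E.exactV _).mp hv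
    rw [← hm, hrViM]
  refine ⟨?_, ?_, ⟨?_, ?_, ?_⟩, ?_⟩
  · -- (i) well-definedness
    intro dAh dVh hder dA dV dB dM hres
    obtain ⟨hbrD, hTD, hrepD, hrgB, hrgM⟩ := hder
    obtain ⟨hrA, hrV2, hriB, hriM⟩ := hres
    have hsAbr : ∀ x y, sA (𝒜.br x y) = ℰ.br (sA x) (sA y) - E.iB (ω x y) := fun x y => by
      rw [hω]; abel
    have hsVrep : ∀ x v, sV (𝒜.rep x v) = ℰ.rep (sA x) (sV v) - E.iM (ϖ x v) := fun x v => by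
      rw [hϖ]; abel
    have hsAT : ∀ v, sA (𝒜.T v) = ℰ.T (sV v) - E.iB (χ v) := fun v => by
      rw [hχ]; abel
    have hdAhsA : ∀ x, ∃ b, dAh (sA x) = sA (dA x) + E.iB b := by
      intro x
      obtain ⟨p, b, hb, hp⟩ := hdecA (dAh (sA x))
      exact ⟨b, by rw [hb, ← hp, hrA]⟩
    have hdVhsV : ∀ v, ∃ m, dVh (sV v) = sV (dV v) + E.iM m := by
      intro v
      obtain ⟨q, m, hm, hq⟩ := hdecV (dVh (sV v))
      exact ⟨m, by rw [hm, ← hq, hrV2]⟩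
    refine ⟨⟨⟨?_, ?_, ?_⟩, ?_, ?_, ?_, ?_⟩, ?_⟩
    · intro x y
      rw [← hrA (𝒜.br x y), hsAbr]
      simp only [map_sub, hbrD, hriB, map_add, E.pA_br, hrA, hsA, hpAiB, sub_zero]
    · intro v
      rw [← hrA (𝒜.T v), hsAT]
      simp only [map_sub, hTD, hriB, hpAiB, sub_zero, E.p_T, hrV2]
    · intro x v
      rw [← hrV2 (𝒜.rep x v), hsVrep]
      simp only [map_sub, hrepD, hriM, hpViM, sub_zero, map_add, LinearMap.add_apply,
        E.p_rep, hrA, hrV2, hsA, hsV]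
    · intro x m
      obtain ⟨b, hb⟩ := hdAhsA x
      apply E.iM_inj
      rw [← hriM, hρM x m, hrepD, hriM, hb]
      simp only [map_add, LinearMap.add_apply, hrep_sm, hrep_bm, add_zero]
    · intro x a
      obtain ⟨b, hb⟩ := hdAhsA x
      apply E.iB_inj
      rw [← hriB, hρB x a, hbrD, hriB, hb]
      simp only [map_add, LinearMap.add_apply, hbr_sb, hbr_bb, add_zero]
      abel
    · intro v a
      obtain ⟨m, hm⟩ := hdVhsV v
      apply E.iM_inj
      rw [← hriM, hμ v a, map_neg, hrepD, hriB, hm]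
      simp only [map_add, LinearMap.add_apply, hrep_bv, hrep_bm, add_zero]
      abel
    · intro m
      apply E.iB_inj
      rw [← hriB, E.iB_T, hTD, hriM, hT_m]
    · intro sA' sV' hsA' hsV'
      constructor
      · intro x
        have h0 : E.pA (sA' x - sA x) = 0 := by simp [map_sub, hsA, hsA']
        obtain ⟨b, hb⟩ := (E.exactA _).mp h0
        have hx : sA' x = sA x + E.iB b := by rw [hb]; abel
        obtain ⟨b', hb'⟩ := hrgB b
        rw [hx, map_add, map_add, ← hb', hpAiB, add_zero]
      · intro v
        have h0 : E.pV (sV' v - sV v) = 0 := by simp [map_sub, hsV, hsV']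
        obtain ⟨m, hm⟩ := (E.exactV _).mp h0
        have hv : sV' v = sV v + E.iM m := by rw [hm]; abel
        obtain ⟨m', hm'⟩ := hrgM m
        rw [hv, map_add, map_add, ← hm', hpViM, add_zero]
  · -- (i') Lie homomorphism
    intro dAh dVh dAh' dVh' hder hder' dA dV dB dM dA' dV' dB' dM' hres hres'
    obtain ⟨hrA, hrV2, hriB, hriM⟩ := hres
    obtain ⟨hrA', hrV2', hriB', hriM'⟩ := hres'
    have hdAhsA : ∀ x, ∃ b, dAh (sA x) = sA (dA x) + E.iB b := by
      intro x
      obtain ⟨p, b, hb, hp⟩ := hdecA (dAh (sA x))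
      exact ⟨b, by rw [hb, ← hp, hrA]⟩
    have hdAhsA' : ∀ x, ∃ b, dAh' (sA x) = sA (dA' x) + E.iB b := by
      intro x
      obtain ⟨p, b, hb, hp⟩ := hdecA (dAh' (sA x))
      exact ⟨b, by rw [hb, ← hp, hrA']⟩
    have hdVhsV : ∀ v, ∃ m, dVh (sV v) = sV (dV v) + E.iM m := by
      intro v
      obtain ⟨q, m, hm, hq⟩ := hdecV (dVh (sV v))
      exact ⟨m, by rw [hm, ← hq, hrV2]⟩
    have hdVhsV' : ∀ v, ∃ m, dVh' (sV v) = sV (dV' v) + E.iM m := by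
      intro v
      obtain ⟨q, m, hm, hq⟩ := hdecV (dVh' (sV v))
      exact ⟨m, by rw [hm, ← hq, hrV2']⟩
    refine ⟨?_, ?_, ?_, ?_⟩
    · intro x
      obtain ⟨b, hb⟩ := hdAhsA x
      obtain ⟨c, hc⟩ := hdAhsA' x
      simp only [LinearMap.sub_apply, LinearMap.comp_apply, Module.End.mul_apply, hb, hc,
        map_add, map_sub, hriB, hriB', hpAiB, add_zero, hrA, hrA']
    · intro v
      obtain ⟨m, hm⟩ := hdVhsV v
      obtain ⟨n, hn⟩ := hdVhsV' v
      simp only [LinearMap.sub_apply, LinearMap.comp_apply, Module.End.mul_apply, hm, hn,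
        map_add, map_sub, hriM, hriM', hpViM, add_zero, hrV2, hrV2']
    · intro a
      simp only [LinearMap.sub_apply, LinearMap.comp_apply, Module.End.mul_apply, hriB, hriB',
        map_sub]
    · intro m
      simp only [LinearMap.sub_apply, LinearMap.comp_apply, Module.End.mul_apply, hriM, hriM',
        map_sub]
  · -- (ii a) kernel elements give 1-cocycles
    intro dAh dVh hder hres φB φM hφB hφM
    obtain ⟨hbrD, hTD, hrepD, hrgB, hrgM⟩ := hder
    obtain ⟨hrA, hrV2, hriB, hriM⟩ := hres
    have hiB0 : ∀ a, dAh (E.iB a) = 0 := fun a => by rw [hriB]; simp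
    have hiM0 : ∀ m, dVh (E.iM m) = 0 := fun m => by rw [hriM]; simp
    have hsAbr : ∀ x y, sA (𝒜.br x y) = ℰ.br (sA x) (sA y) - E.iB (ω x y) := fun x y => by
      rw [hω]; abel
    have hsVrep : ∀ x v, sV (𝒜.rep x v) = ℰ.rep (sA x) (sV v) - E.iM (ϖ x v) := fun x v => by
      rw [hϖ]; abel
    have hsAT : ∀ v, sA (𝒜.T v) = ℰ.T (sV v) - E.iB (χ v) := fun v => by
      rw [hχ]; abel
    refine ⟨?_, ?_, ?_⟩
    · intro x y
      apply E.iB_inj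
      rw [map_sub, hφB (𝒜.br x y), hsAbr, map_sub, hbrD, hiB0, sub_zero,
        ← hφB x, ← hφB y, hbr_bs, hbr_sb]
      abel
    · intro x v
      apply E.iM_inj
      rw [map_add, hφM (𝒜.rep x v), hsVrep, map_sub, hrepD, hiM0, sub_zero,
        ← hφM v, ← hφB x, hrep_sm, hrep_bv, hμ]
      abel
    · intro v
      apply E.iB_inj
      rw [hφB (𝒜.T v), hsAT, map_sub, hiB0, sub_zero, hTD, ← hφM v, hT_m]
  · -- (ii b) injectivity
    intro dAh dVh dAh' dVh' hder hder' hres hres' hagA hagV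
    obtain ⟨hrA, hrV2, hriB, hriM⟩ := hres
    obtain ⟨hrA', hrV2', hriB', hriM'⟩ := hres'
    have h1 : ∀ a, dAh (E.iB a) = 0 := fun a => by rw [hriB]; simp
    have h1' : ∀ a, dAh' (E.iB a) = 0 := fun a => by rw [hriB']; simp
    have h2 : ∀ m, dVh (E.iM m) = 0 := fun m => by rw [hriM]; simp
    have h2' : ∀ m, dVh' (E.iM m) = 0 := fun m => by rw [hriM']; simp
    constructor
    · apply LinearMap.ext; intro x
      obtain ⟨p, b, hx, -⟩ := hdecA x
      rw [hx, map_add, map_add, h1, h1', hagA]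
    · apply LinearMap.ext; intro v
      obtain ⟨q, m, hv, -⟩ := hdecV v
      rw [hv, map_add, map_add, h2, h2', hagV]
  · -- (ii c) surjectivity onto Z1
    intro φB φM hz
    have hz1 : ∀ x y, ρB x (φB y) - ρB y (φB x) = φB (𝒜.br x y) := hz.1
    have hz2 : ∀ x v, μ v (φB x) + φM (𝒜.rep x v) = ρM x (φM v) := hz.2.1
    have hz3 : ∀ v, φB (𝒜.T v) = ℬ.T (φM v) := hz.2.2
    have hz2' : ∀ x v, φM (𝒜.rep x v) = ρM x (φM v) - μ v (φB x) := fun x v => by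
      rw [← hz2]; abel
    refine ⟨E.iB ∘ₗ (φB ∘ₗ E.pA), E.iM ∘ₗ (φM ∘ₗ E.pV), ⟨?_, ?_, ?_, ?_, ?_⟩,
      ⟨?_, ?_, ?_, ?_⟩, ?_, ?_⟩
    · intro x y
      obtain ⟨p, b, hx, hpx⟩ := hdecA x
      obtain ⟨q, c, hy, hpy⟩ := hdecA y
      simp only [LinearMap.comp_apply, E.pA_br, hpx, hpy]
      rw [hx, hy, ← hz1]
      simp only [map_sub, map_add, LinearMap.add_apply, hbr_sb, hbr_bs, hbr_bb,
        add_zero, zero_add]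
      abel
    · intro v
      simp only [LinearMap.comp_apply, E.p_T, hz3, E.iB_T]
    · intro x v
      obtain ⟨p, b, hx, hpx⟩ := hdecA x
      obtain ⟨q, m, hv, hpv⟩ := hdecV v
      simp only [LinearMap.comp_apply, E.p_rep, hpx, hpv, hz2']
      rw [hx, hv]
      simp only [map_sub, map_add, LinearMap.add_apply, hrep_sm, hrep_bv, hrep_bm,
        add_zero, zero_add]
      abel
    · intro a
      exact ⟨φB (E.pA (E.iB a)), rfl⟩
    · intro m
      exact ⟨φM (E.pV (E.iM m)), rfl⟩
    · intro x
      simp only [LinearMap.comp_apply, hpAiB, LinearMap.zero_apply]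
    · intro v
      simp only [LinearMap.comp_apply, hpViM, LinearMap.zero_apply]
    · intro a
      simp only [LinearMap.comp_apply, hpAiB, map_zero, LinearMap.zero_apply]
    · intro m
      simp only [LinearMap.comp_apply, hpViM, map_zero, LinearMap.zero_apply]
    · intro x
      simp only [LinearMap.comp_apply, hsA]
    · intro v
      simp only [LinearMap.comp_apply, hsV]
  · -- (iii)
    intro dA dV dB dM hcomp
    obtain ⟨⟨hD1, hD2, hD3⟩, hc1, hc2, hc3, hc4⟩ := hcomp
    constructor
    · rintro ⟨dAh, dVh, hder, hres⟩
      obtain ⟨hbrD, hTD, hrepD, -, -⟩ := hder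
      obtain ⟨hrA, hrV2, hriB, hriM⟩ := hres
      have hφBkey : ∀ x, E.iB ((rB ∘ₗ (dAh ∘ₗ sA - sA ∘ₗ dA)) x) = dAh (sA x) - sA (dA x) := by
        intro x
        have h0 : E.pA (dAh (sA x) - sA (dA x)) = 0 := by simp [map_sub, hrA, hsA]
        simpa [LinearMap.comp_apply, LinearMap.sub_apply] using hiBrB _ h0
      have hφMkey : ∀ v, E.iM ((rV ∘ₗ (dVh ∘ₗ sV - sV ∘ₗ dV)) v) = dVh (sV v) - sV (dV v) := by
        intro v
        have h0 : E.pV (dVh (sV v) - sV (dV v)) = 0 := by simp [map_sub, hrV2, hsV]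
        simpa [LinearMap.comp_apply, LinearMap.sub_apply] using hiMrV _ h0
      have hφB : ∀ x, dAh (sA x) = sA (dA x) + E.iB ((rB ∘ₗ (dAh ∘ₗ sA - sA ∘ₗ dA)) x) := by
        intro x; rw [hφBkey]; abel
      have hφM : ∀ v, dVh (sV v) = sV (dV v) + E.iM ((rV ∘ₗ (dVh ∘ₗ sV - sV ∘ₗ dV)) v) := by
        intro v; rw [hφMkey]; abel
      refine ⟨rB ∘ₗ (dAh ∘ₗ sA - sA ∘ₗ dA), rV ∘ₗ (dVh ∘ₗ sV - sV ∘ₗ dV), ?_, ?_, ?_⟩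
      · intro x y
        apply E.iB_inj
        simp only [map_sub]
        rw [← hriB, hω, map_sub, hbrD, hφB x, hφB y, hφB (𝒜.br x y), hD1]
        simp only [map_add, LinearMap.add_apply, hbr_ss, hbr_sb, hbr_bs, hbr_bb,
          add_zero, zero_add]
        abel
      · intro x v
        apply E.iM_inj
        simp only [map_sub, map_add, map_neg]
        rw [← hriM, hϖ, map_sub, hrepD, hφB x, hφM v, hφM (𝒜.rep x v), hD3]
        simp only [map_add, LinearMap.add_apply, hrep_sv, hrep_sm, hrep_bv, hrep_bm,
          add_zero, zero_add]
        abel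
      · intro v
        apply E.iB_inj
        simp only [map_sub, map_add, map_neg]
        rw [← hriB, hχ, map_sub, hTD, hφM v, hφB (𝒜.T v)]
        simp only [map_add, hT_s, hT_m, hD2, add_zero, zero_add]
        abel
    · rintro ⟨φB, φM, hc1', hc2', hc3'⟩
      have hdBω : ∀ x y, dB (ω x y)
          = ρB x (φB y) - ρB y (φB x) - φB (𝒜.br x y) + ω (dA x) y + ω x (dA y) := by
        intro x y
        have h := hc1' x y
        rw [sub_sub, sub_eq_iff_eq_add] at h
        exact h.trans (by abel)
      have hdMϖ : ∀ x v, dM (ϖ x v)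
          = - μ v (φB x) + ρM x (φM v) - φM (𝒜.rep x v) + ϖ (dA x) v + ϖ x (dV v) := by
        intro x v
        have h := hc2' x v
        rw [sub_sub, sub_eq_iff_eq_add] at h
        exact h.trans (by abel)
      have hdBχ : ∀ v, dB (χ v) = - φB (𝒜.T v) + ℬ.T (φM v) + χ (dV v) := by
        intro v
        have h := hc3' v
        rw [sub_eq_iff_eq_add] at h
        exact h.trans (by abel)
      obtain ⟨dAh, hdefA⟩ : ∃ f : Ah →ₗ[K] Ah, ∀ z, f z
          = sA (dA (E.pA z)) + E.iB (φB (E.pA z)) + E.iB (dB (rB (z - sA (E.pA z)))) :=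
        ⟨sA ∘ₗ (dA ∘ₗ E.pA) + E.iB ∘ₗ (φB ∘ₗ E.pA)
          + E.iB ∘ₗ (dB ∘ₗ (rB ∘ₗ (LinearMap.id - sA ∘ₗ E.pA))), fun z => by
            simp [LinearMap.add_apply, LinearMap.comp_apply, LinearMap.sub_apply]⟩
      obtain ⟨dVh, hdefV⟩ : ∃ f : Vh →ₗ[K] Vh, ∀ z, f z
          = sV (dV (E.pV z)) + E.iM (φM (E.pV z)) + E.iM (dM (rV (z - sV (E.pV z)))) :=
        ⟨sV ∘ₗ (dV ∘ₗ E.pV) + E.iM ∘ₗ (φM ∘ₗ E.pV)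
          + E.iM ∘ₗ (dM ∘ₗ (rV ∘ₗ (LinearMap.id - sV ∘ₗ E.pV))), fun z => by
            simp [LinearMap.add_apply, LinearMap.comp_apply, LinearMap.sub_apply]⟩
      have hdAh_s : ∀ p, dAh (sA p) = sA (dA p) + E.iB (φB p) := by
        intro p
        rw [hdefA]
        simp [hsA]
      have hdAh_b : ∀ b, dAh (E.iB b) = E.iB (dB b) := by
        intro b
        rw [hdefA]
        simp [hpAiB, hrBiB]
      have hdVh_s : ∀ q, dVh (sV q) = sV (dV q) + E.iM (φM q) := by
        intro q
        rw [hdefV]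
        simp [hsV]
      have hdVh_m : ∀ m, dVh (E.iM m) = E.iM (dM m) := by
        intro m
        rw [hdefV]
        simp [hpViM, hrViM]
      refine ⟨dAh, dVh, ⟨?_, ?_, ?_, ?_, ?_⟩, ?_, ?_, ?_, ?_⟩
      · intro x y
        obtain ⟨p, b, hx, -⟩ := hdecA x
        obtain ⟨q, c, hy, -⟩ := hdecA y
        rw [hx, hy]
        simp only [map_add, map_sub, map_neg, LinearMap.add_apply, hbr_ss, hbr_sb, hbr_bs,
          hbr_bb, hdAh_s, hdAh_b, hdBω, hD1, hc2, add_zero, zero_add]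
        abel
      · intro v
        obtain ⟨q, m, hv, -⟩ := hdecV v
        rw [hv]
        simp only [map_add, map_sub, map_neg, LinearMap.add_apply, hT_s, hT_m, hdAh_s,
          hdAh_b, hdVh_s, hdVh_m, hdBχ, hD2, hc4, add_zero, zero_add]
        abel
      · intro x v
        obtain ⟨p, b, hx, -⟩ := hdecA x
        obtain ⟨q, m, hv, -⟩ := hdecV v
        rw [hx, hv]
        simp only [map_add, map_sub, map_neg, LinearMap.add_apply, hrep_sv, hrep_sm,
          hrep_bv, hrep_bm, hdAh_s, hdAh_b, hdVh_s, hdVh_m, hdMϖ, hD3, hc1, hc3,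
          add_zero, zero_add]
        abel
      · intro a
        rw [hdAh_b]
        exact ⟨_, rfl⟩
      · intro m
        rw [hdVh_m]
        exact ⟨_, rfl⟩
      · intro x
        rw [hdAh_s]
        simp [hsA, hpAiB]
      · intro v
        rw [hdVh_s]
        simp [hsV, hpViM]
      · exact hdAh_b
      · exact hdVh_m


end
end

section
/- Let ℰ be an abelian extension of 𝒜 by ℬ with section (𝔰,s) and induced 2-cocycle (ω,ϖ,χ), and let C_{(μ,ρ_B,ρ_M)} be the set of pairs (α,β) ∈ Aut(𝒜) × Aut(ℬ) satisfying β₁(ρ_B(x)a) = ρ_B(α₁x)β₁(a), β₂(ρ_M(x)m) = ρ_M(α₁x)β₂(m), β₂(μ(v)a) = μ(α₂v)β₁(a). Then there is an exact sequence 0 → 𝒵¹(𝒜,ℬ) → Aut_ℬ(ℰ) →^K C_{(μ,ρ_B,ρ_M)} →^W ℋ²(𝒜,ℬ), where W(α,β) = [(ω_{(α,β)},ϖ_{(α,β)},χ_{(α,β)}) − (ω,ϖ,χ)]; in particular (α,β) ∈ C_{(μ,ρ_B,ρ_M)} is inducible if and only if (ω,ϖ,χ) and (ω_{(α,β)},ϖ_{(α,β)},χ_{(α,β)})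 lie in the same cohomology class. -/
universe u

section
variable (K : Type u) [Field K]

variable {A V B M : Type u}
  [AddCommGroup A] [Module K A] [AddCommGroup V] [Module K V]
  [AddCommGroup B] [Module K B] [AddCommGroup M] [Module K M]

/-- Automorphism conditions for a pair of plain maps. -/
def IsAutFun (𝒜 : RelRB K A V) (f : A → A) (g : V → V) : Prop :=
  Function.Bijective f ∧ Function.Bijective g ∧
  (∀ x y, f (𝒜.br x y) = 𝒜.br (f x) (f y)) ∧
  (∀ v, f (𝒜.T v) = 𝒜.T (g v)) ∧
  (∀ x v, g (𝒜.rep x v) = 𝒜.rep (f x) (g v))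
/-- Inducibility of a pair `(α, β)` of automorphisms with respect to a non-abelian
extension: there is an automorphism `γ` of `ℰ` restricting to `β` on `ℬ` and projecting
to `α` on `𝒜`. -/
def Inducible {Ah Vh : Type u} [AddCommGroup Ah] [Module K Ah]
    [AddCommGroup Vh] [Module K Vh]
    {𝒜 : RelRB K A V} {ℬ : RelRB K B M} {ℰ : RelRB K Ah Vh}
    (E : ExtData K 𝒜 ℬ ℰ) (sA : A →ₗ[K] Ah) (sV : V →ₗ[K] Vh)
    (α₁ : A → A) (α₂ : V → V) (β₁ : B → B) (β₂ : M → M) : Prop :=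
  ∃ (γ₁ : Ah ≃ₗ[K] Ah) (γ₂ : Vh ≃ₗ[K] Vh),
    (∀ x y, γ₁ (ℰ.br x y) = ℰ.br (γ₁ x) (γ₁ y)) ∧
    (∀ v, γ₁ (ℰ.T v) = ℰ.T (γ₂ v)) ∧
    (∀ x v, γ₂ (ℰ.rep x v) = ℰ.rep (γ₁ x) (γ₂ v)) ∧
    (∀ a, γ₁ (E.iB a) = E.iB (β₁ a)) ∧
    (∀ m, γ₂ (E.iM m) = E.iM (β₂ m)) ∧
    (∀ x, E.pA (γ₁ (sA x)) = α₁ x) ∧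
    (∀ v, E.pV (γ₂ (sV v)) = α₂ v)
/-- Non-abelian 1-cocycles on `𝒜` with values in `ℬ` (relative to the maps
`μ, ρB, ρM` of the induced non-abelian 2-cocycle). -/
def IsZ1nab (𝒜 : RelRB K A V) (ℬ : RelRB K B M)
    (μ : V → B → M) (ρB : A → B → B) (ρM : A → M → M)
    (ζ : A → B) (η : V → M) : Prop :=
  (∀ x y, ρB y (ζ x) + ζ (𝒜.br x y) = ρB x (ζ y) + ℬ.br (ζ x) (ζ y)) ∧
  (∀ x a, ℬ.br (ζ x) a = 0) ∧
  (∀ x m, ℬ.rep (ζ x) m = 0) ∧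
  (∀ (a : B) v, ℬ.rep a (η v) = 0) ∧
  (∀ x v, ℬ.rep (ζ x) (η v) + ρM x (η v) = η (𝒜.rep x v) + μ v (ζ x)) ∧
  (∀ v, ℬ.T (η v) = ζ (𝒜.T v))

/-- Membership in `Ker K`: an automorphism of `ℰ` preserving `ℬ` which induces the
identity on both `𝒜` and `ℬ`. -/
def InKerK {Ah Vh : Type u} [AddCommGroup Ah] [Module K Ah]
    [AddCommGroup Vh] [Module K Vh]
    {𝒜 : RelRB K A V} {ℬ : RelRB K B M} {ℰ : RelRB K Ah Vh}
    (E : ExtData K 𝒜 ℬ ℰ) (sA : A →ₗ[K] Ah) (sV : V →ₗ[K] Vh)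
    (γ₁ : Ah ≃ₗ[K] Ah) (γ₂ : Vh ≃ₗ[K] Vh) : Prop :=
  (∀ x y, γ₁ (ℰ.br x y) = ℰ.br (γ₁ x) (γ₁ y)) ∧
  (∀ v, γ₁ (ℰ.T v) = ℰ.T (γ₂ v)) ∧
  (∀ x v, γ₂ (ℰ.rep x v) = ℰ.rep (γ₁ x) (γ₂ v)) ∧
  (∀ a, γ₁ (E.iB a) = E.iB a) ∧ (∀ m, γ₂ (E.iM m) = E.iM m) ∧
  (∀ x, E.pA (γ₁ (sA x)) = x) ∧ (∀ v, E.pV (γ₂ (sV v)) = v)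
/-- The compatibility condition defining `C_{(μ,ρ_B,ρ_M)}`. -/
def InC (𝒜 : RelRB K A V)
    (μ : V → B → M) (ρB : A → B → B) (ρM : A → M → M)
    (α₁ : A → A) (α₂ : V → V) (β₁ : B → B) (β₂ : M → M) : Prop :=
  (∀ x a, β₁ (ρB x a) = ρB (α₁ x) (β₁ a)) ∧
  (∀ x m, β₂ (ρM x m) = ρM (α₁ x) (β₂ m)) ∧
  (∀ v a, β₂ (μ v a) = μ (α₂ v) (β₁ a))

set_option maxHeartbeats 1600000 in
/-- the Wells exact sequence
`0 → 𝒵¹(𝒜,ℬ) → Aut_ℬ(ℰ) → C_{(μ,ρ_B,ρ_M)} → ℋ²(𝒜,ℬ)` for an abelian extension: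
the image of `K` lies in `C_{(μ,ρ_B,ρ_M)}`; a pair `(α,β) ∈ C_{(μ,ρ_B,ρ_M)}` is
inducible iff `(ω,ϖ,χ)` and its twist are cohomologous; and `Ker K ≅ 𝒵¹(𝒜,ℬ)`. -/
theorem wells_exactness_abelian {Ah Vh : Type u}
    [AddCommGroup Ah] [Module K Ah] [AddCommGroup Vh] [Module K Vh]
    (𝒜 : RelRB K A V) (ℬ : RelRB K B M)
    (habr : ∀ a b, ℬ.br a b = 0) (habrep : ∀ (a : B) (m : M), ℬ.rep a m = 0)
    (ℰ : RelRB K Ah Vh) (E : ExtData K 𝒜 ℬ ℰ)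
    (sA : A →ₗ[K] Ah) (sV : V →ₗ[K] Vh)
    (hsA : ∀ x, E.pA (sA x) = x) (hsV : ∀ v, E.pV (sV v) = v)
    (ω : A → A → B) (ϖ : A → V → M) (χ : V → B)
    (μ : V → B → M) (ρB : A → B → B) (ρM : A → M → M)
    (hcoc : InducedCocycle K E sA sV ω ϖ χ μ ρB ρM) :
    -- Im K ⊆ C
    (∀ (γ₁ : Ah ≃ₗ[K] Ah) (γ₂ : Vh ≃ₗ[K] Vh),
      IsAutFun K ℰ (fun x => γ₁ x) (fun v => γ₂ v) →
      ∀ (α₁ : A → A) (α₂ : V → V) (β₁ : B → B) (β₂ : M → M),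
        (∀ x, E.pA (γ₁ (sA x)) = α₁ x) → (∀ v, E.pV (γ₂ (sV v)) = α₂ v) →
        (∀ a, γ₁ (E.iB a) = E.iB (β₁ a)) → (∀ m, γ₂ (E.iM m) = E.iM (β₂ m)) →
        InC K 𝒜 μ ρB ρM α₁ α₂ β₁ β₂) ∧
    -- exactness at C : Ker W = Im K
    (∀ (α₁ : A ≃ₗ[K] A) (α₂ : V ≃ₗ[K] V),
      IsAutFun K 𝒜 (fun x => α₁ x) (fun v => α₂ v) →
      ∀ (β₁ : B ≃ₗ[K] B) (β₂ : M ≃ₗ[K] M),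
        IsAutFun K ℬ (fun a => β₁ a) (fun m => β₂ m) →
        InC K 𝒜 μ ρB ρM (fun x => α₁ x) (fun v => α₂ v)
          (fun a => β₁ a) (fun m => β₂ m) →
        (Inducible K E sA sV (fun x => α₁ x) (fun v => α₂ v)
            (fun a => β₁ a) (fun m => β₂ m) ↔
          ∃ (φB : A →ₗ[K] B) (φM : V →ₗ[K] M),
            (∀ x y, β₁ (ω (α₁.symm x) (α₁.symm y)) - ω x y
                = ρB x (φB y) - ρB y (φB x) - φB (𝒜.br x y)) ∧
            (∀ x v, β₂ (ϖ (α₁.symm x) (α₂.symm v)) - ϖ x v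
                = - μ v (φB x) + ρM x (φM v) - φM (𝒜.rep x v)) ∧
            (∀ v, β₁ (χ (α₂.symm v)) - χ v = - φB (𝒜.T v) + ℬ.T (φM v)))) ∧
    -- exactness at Aut_ℬ(ℰ) : Ker K ≅ 𝒵¹(𝒜,ℬ)
    ((∀ γ₁ γ₂, InKerK K E sA sV γ₁ γ₂ →
      ∀ (ζ : A →ₗ[K] B) (η : V →ₗ[K] M),
        (∀ x, E.iB (ζ x) = γ₁ (sA x) - sA x) →
        (∀ v, E.iM (η v) = γ₂ (sV v) - sV v) →
        IsZ1 K 𝒜 ℬ μ ρB ρM (fun x => ζ x) (fun v => η v)) ∧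
     (∀ γ₁ γ₂ γ₁' γ₂', InKerK K E sA sV γ₁ γ₂ → InKerK K E sA sV γ₁' γ₂' →
      (∀ x, γ₁ (sA x) = γ₁' (sA x)) → (∀ v, γ₂ (sV v) = γ₂' (sV v)) →
      γ₁ = γ₁' ∧ γ₂ = γ₂') ∧
     (∀ (ζ : A →ₗ[K] B) (η : V →ₗ[K] M),
      IsZ1 K 𝒜 ℬ μ ρB ρM (fun x => ζ x) (fun v => η v) →
      ∃ γ₁ γ₂, InKerK K E sA sV γ₁ γ₂ ∧
        (∀ x, E.iB (ζ x) = γ₁ (sA x) - sA x) ∧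
        (∀ v, E.iM (η v) = γ₂ (sV v) - sV v))) := by
  obtain ⟨hω, hϖ, hχ, hμ, hρB, hρM⟩ := hcoc
  -- basic exactness facts
  have hpAiB : ∀ b, E.pA (E.iB b) = 0 := fun b => (E.exactA _).mpr ⟨b, rfl⟩
  have hpViM : ∀ m, E.pV (E.iM m) = 0 := fun m => (E.exactV _).mpr ⟨m, rfl⟩
  -- lift maps
  obtain ⟨r, hr⟩ : ∃ r : Ah →ₗ[K] B, ∀ x, E.iB (r x) = x - sA (E.pA x) := by
    have hex : ∀ x : Ah, ∃ b, E.iB b = x - sA (E.pA x) := by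
      intro x
      have h0 : E.pA (x - sA (E.pA x)) = 0 := by simp [map_sub, hsA]
      exact (E.exactA _).mp h0
    choose f hf using hex
    refine ⟨⟨⟨f, ?_⟩, ?_⟩, hf⟩
    · intro x y; apply E.iB_inj; simp only [hf, map_add]; abel
    · intro c x; apply E.iB_inj; simp only [hf, map_smul, RingHom.id_apply, smul_sub]
  obtain ⟨rV, hrV⟩ : ∃ rV : Vh →ₗ[K] M, ∀ v, E.iM (rV v) = v - sV (E.pV v) := by
    have hex : ∀ v : Vh, ∃ m, E.iM m = v - sV (E.pV v) := by
      intro v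
      have h0 : E.pV (v - sV (E.pV v)) = 0 := by simp [map_sub, hsV]
      exact (E.exactV _).mp h0
    choose f hf using hex
    refine ⟨⟨⟨f, ?_⟩, ?_⟩, hf⟩
    · intro x y; apply E.iM_inj; simp only [hf, map_add]; abel
    · intro c x; apply E.iM_inj; simp only [hf, map_smul, RingHom.id_apply, smul_sub]
  have hdec : ∀ x : Ah, x = sA (E.pA x) + E.iB (r x) := by
    intro x; rw [hr]; abel
  have hdecV : ∀ v : Vh, v = sV (E.pV v) + E.iM (rV v) := by
    intro v; rw [hrV]; abel
  have hriB : ∀ b, r (E.iB b) = b := by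
    intro b; apply E.iB_inj; rw [hr, hpAiB, map_zero, sub_zero]
  have hrsA : ∀ x, r (sA x) = 0 := by
    intro x; apply E.iB_inj; rw [hr, hsA, sub_self, map_zero]
  have hrViM : ∀ m, rV (E.iM m) = m := by
    intro m; apply E.iM_inj; rw [hrV, hpViM, map_zero, sub_zero]
  have hrVsV : ∀ v, rV (sV v) = 0 := by
    intro v; apply E.iM_inj; rw [hrV, hsV, sub_self, map_zero]
  -- abelianness
  have hiBbr0 : ∀ a b, ℰ.br (E.iB a) (E.iB b) = 0 := by
    intro a b; rw [← E.iB_br, habr, map_zero]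
  have hiBrep0 : ∀ a m, ℰ.rep (E.iB a) (E.iM m) = 0 := by
    intro a m; rw [← E.i_rep, habrep, map_zero]
  -- skew symmetry
  have hskew : ∀ x y : Ah, ℰ.br x y = - ℰ.br y x := by
    intro x y; exact eq_neg_of_add_eq_zero_left (ℰ.skew x y)
  -- bilinearity expansion
  have hbil : ∀ u v w z : Ah, ℰ.br (u + v) (w + z)
      = ℰ.br u w + ℰ.br u z + ℰ.br v w + ℰ.br v z := by
    intro u v w z
    simp only [map_add, LinearMap.add_apply]; abel
  have hbilrep : ∀ (u v : Ah) (w z : Vh), ℰ.rep (u + v) (w + z)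
      = ℰ.rep u w + ℰ.rep u z + ℰ.rep v w + ℰ.rep v z := by
    intro u v w z
    simp only [map_add, LinearMap.add_apply]; abel
  -- rearranged cocycle formulas
  have hbrss : ∀ x y, ℰ.br (sA x) (sA y) = E.iB (ω x y) + sA (𝒜.br x y) := by
    intro x y; rw [hω]; abel
  have hrepss : ∀ x v, ℰ.rep (sA x) (sV v) = E.iM (ϖ x v) + sV (𝒜.rep x v) := by
    intro x v; rw [hϖ]; abel
  have hTs : ∀ v, ℰ.T (sV v) = E.iB (χ v) + sA (𝒜.T v) := by
    intro v; rw [hχ]; abel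
  have hrepBs : ∀ v a, ℰ.rep (E.iB a) (sV v) = - E.iM (μ v a) := by
    intro v a; rw [hμ, neg_neg]
  -- additivity of the representation data
  have hρBadd : ∀ x a b, ρB x (a + b) = ρB x a + ρB x b := by
    intro x a b; apply E.iB_inj
    rw [map_add, hρB, hρB, hρB]; simp only [map_add, LinearMap.add_apply]
  have hρMadd : ∀ x m n, ρM x (m + n) = ρM x m + ρM x n := by
    intro x m n; apply E.iM_inj
    rw [map_add, hρM, hρM, hρM]; simp only [map_add, LinearMap.add_apply]
  have hμadd : ∀ v a b, μ v (a + b) = μ v a + μ v b := by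
    intro v a b; apply E.iM_inj
    rw [map_add, hμ, hμ, hμ]; simp only [map_add, LinearMap.add_apply]; abel
  -- key computation lemmas: action on arbitrary elements
  have hbrX : ∀ (x : Ah) (b : B), ℰ.br x (E.iB b) = E.iB (ρB (E.pA x) b) := by
    intro x b
    conv_lhs => rw [hdec x]
    rw [map_add, LinearMap.add_apply, hiBbr0, add_zero, hρB]
  have hbrX' : ∀ (x : Ah) (b : B), ℰ.br (E.iB b) x = - E.iB (ρB (E.pA x) b) := by
    intro x b; rw [hskew, hbrX]
  have hrepXm : ∀ (x : Ah) (m : M), ℰ.rep x (E.iM m) = E.iM (ρM (E.pA x) m) := by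
    intro x m
    conv_lhs => rw [hdec x]
    rw [map_add, LinearMap.add_apply, hiBrep0, add_zero, hρM]
  have hrepBv : ∀ (b : B) (v : Vh), ℰ.rep (E.iB b) v = - E.iM (μ (E.pV v) b) := by
    intro b v
    conv_lhs => rw [hdecV v]
    rw [map_add, hiBrep0, add_zero, hrepBs]
  -- global structure formulas
  have hbrformula : ∀ x y : Ah, ℰ.br x y
      = sA (𝒜.br (E.pA x) (E.pA y))
        + E.iB (ω (E.pA x) (E.pA y) + ρB (E.pA x) (r y) - ρB (E.pA y) (r x)) := by
    intro x y
    conv_lhs => rw [hdec x, hdec y]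
    rw [hbil, hbrss, ← hρB, hskew (E.iB (r x)) (sA (E.pA y)), ← hρB, hiBbr0,
      map_sub, map_add]
    abel
  have hrepformula : ∀ (x : Ah) (v : Vh), ℰ.rep x v
      = sV (𝒜.rep (E.pA x) (E.pV v))
        + E.iM (ϖ (E.pA x) (E.pV v) + ρM (E.pA x) (rV v) - μ (E.pV v) (r x)) := by
    intro x v
    conv_lhs => rw [hdec x, hdecV v]
    rw [hbilrep, hrepss, ← hρM, hrepBs, hiBrep0, map_sub, map_add]
    abel
  have hTformula : ∀ v : Vh, ℰ.T v
      = sA (𝒜.T (E.pV v)) + E.iB (χ (E.pV v) + ℬ.T (rV v)) := by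
    intro v
    conv_lhs => rw [hdecV v]
    rw [map_add, hTs, ← E.iB_T, map_add]
    abel
  refine ⟨?_, ?_, ?_, ?_, ?_⟩
  · -- Part 1: Im K ⊆ C
    intro γ₁ γ₂ hγ α₁ α₂ β₁ β₂ hα₁ hα₂ hβ₁ hβ₂
    obtain ⟨-, -, hγbr, hγT, hγrep⟩ := hγ
    simp only [] at hγbr hγT hγrep
    refine ⟨?_, ?_, ?_⟩
    · intro x a
      apply E.iB_inj
      rw [← hβ₁, hρB, hγbr, hβ₁, hbrX, hα₁]
    · intro x m
      apply E.iM_inj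
      rw [← hβ₂, hρM, hγrep, hβ₂, hrepXm, hα₁]
    · intro v a
      apply E.iM_inj
      rw [← hβ₂, hμ, map_neg, hγrep, hβ₁, hrepBv, hα₂, hμ]; abel
  · -- Part 2: exactness at C
    intro α₁ α₂ hα β₁ β₂ hβ hC
    have hαbr : ∀ x y, α₁ (𝒜.br x y) = 𝒜.br (α₁ x) (α₁ y) := hα.2.2.1
    have hαT : ∀ v, α₁ (𝒜.T v) = 𝒜.T (α₂ v) := hα.2.2.2.1
    have hαrep : ∀ x v, α₂ (𝒜.rep x v) = 𝒜.rep (α₁ x) (α₂ v) := hα.2.2.2.2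
    have hβT : ∀ m, β₁ (ℬ.T m) = ℬ.T (β₂ m) := hβ.2.2.2.1
    have hC1 : ∀ x a, β₁ (ρB x a) = ρB (α₁ x) (β₁ a) := hC.1
    have hC2 : ∀ x m, β₂ (ρM x m) = ρM (α₁ x) (β₂ m) := hC.2.1
    have hC3 : ∀ v a, β₂ (μ v a) = μ (α₂ v) (β₁ a) := hC.2.2
    have hαbrs : ∀ x y, 𝒜.br (α₁.symm x) (α₁.symm y) = α₁.symm (𝒜.br x y) := by
      intro x y; apply α₁.injective; simp [hαbr]
    have hαTs : ∀ v, 𝒜.T (α₂.symm v) = α₁.symm (𝒜.T v) := by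
      intro v; apply α₁.injective; simp [hαT]
    have hαreps : ∀ x v, 𝒜.rep (α₁.symm x) (α₂.symm v) = α₂.symm (𝒜.rep x v) := by
      intro x v; apply α₂.injective; simp [hαrep]
    constructor
    · -- forward: inducible → cohomologous
      rintro ⟨γ₁, γ₂, hγbr, hγT, hγrep, hγiB, hγiM, hγpA, hγpV⟩
      have hγpA' : ∀ x, E.pA (γ₁ (sA x)) = α₁ x := hγpA
      have hγpV' : ∀ v, E.pV (γ₂ (sV v)) = α₂ v := hγpV
      set φB : A →ₗ[K] B := r ∘ₗ (γ₁ : Ah →ₗ[K] Ah) ∘ₗ sA ∘ₗ (α₁.symm : A →ₗ[K] A) with hφBdef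
      set φM : V →ₗ[K] M := rV ∘ₗ (γ₂ : Vh →ₗ[K] Vh) ∘ₗ sV ∘ₗ (α₂.symm : V →ₗ[K] V) with hφMdef
      have hts : ∀ x, γ₁ (sA (α₁.symm x)) = sA x + E.iB (φB x) := by
        intro x
        have hx : E.iB (φB x) = γ₁ (sA (α₁.symm x)) - sA x := by
          have h0 := hr (γ₁ (sA (α₁.symm x)))
          rw [hγpA', α₁.apply_symm_apply] at h0
          exact h0
        rw [hx]; abel
      have hus : ∀ v, γ₂ (sV (α₂.symm v)) = sV v + E.iM (φM v) := by
        intro v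
        have hv : E.iM (φM v) = γ₂ (sV (α₂.symm v)) - sV v := by
          have h0 := hrV (γ₂ (sV (α₂.symm v)))
          rw [hγpV', α₂.apply_symm_apply] at h0
          exact h0
        rw [hv]; abel
      refine ⟨φB, φM, ?_, ?_, ?_⟩
      · intro x y
        have key : E.iB (β₁ (ω (α₁.symm x) (α₁.symm y)))
            = E.iB (ω x y) + (E.iB (ρB x (φB y)) - E.iB (ρB y (φB x))
              - E.iB (φB (𝒜.br x y))) := by
          rw [← hγiB, hω, map_sub, hγbr, hαbrs, hts, hts, hts, hbil, hbrss,
            ← hρB, hskew (E.iB (φB x)) (sA y), ← hρB, hiBbr0]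
          abel
        apply E.iB_inj
        simp only [map_sub]
        rw [key]; abel
      · intro x v
        have key : E.iM (β₂ (ϖ (α₁.symm x) (α₂.symm v)))
            = E.iM (ϖ x v) + (- E.iM (μ v (φB x)) + E.iM (ρM x (φM v))
              - E.iM (φM (𝒜.rep x v))) := by
          rw [← hγiM, hϖ, map_sub, hγrep, hαreps, hts, hus, hus, hbilrep, hrepss,
            ← hρM, hrepBs, hiBrep0]
          abel
        apply E.iM_inj
        simp only [map_sub, map_add, map_neg]
        rw [key]; abel
      · intro v
        have key : E.iB (β₁ (χ (α₂.symm v)))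
            = E.iB (χ v) + (- E.iB (φB (𝒜.T v)) + E.iB (ℬ.T (φM v))) := by
          rw [← hγiB, hχ, map_sub, hγT, hus, hαTs, hts, map_add, hTs, ← E.iB_T]
          abel
        apply E.iB_inj
        simp only [map_sub, map_add, map_neg]
        rw [key]; abel
    · -- backward: cohomologous → inducible
      rintro ⟨φB, φM, h1, h2, h3⟩
      obtain ⟨γ₁, hγ₁⟩ : ∃ γ₁ : Ah ≃ₗ[K] Ah,
          ∀ x, γ₁ x = sA (α₁ (E.pA x)) + E.iB (β₁ (r x) + φB (α₁ (E.pA x))) := by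
        have hc1 : ((sA ∘ₗ (α₁ : A →ₗ[K] A) ∘ₗ E.pA
              + E.iB ∘ₗ ((β₁ : B →ₗ[K] B) ∘ₗ r + φB ∘ₗ (α₁ : A →ₗ[K] A) ∘ₗ E.pA)).comp
            (sA ∘ₗ (α₁.symm : A →ₗ[K] A) ∘ₗ E.pA
              + E.iB ∘ₗ ((β₁.symm : B →ₗ[K] B) ∘ₗ (r - φB ∘ₗ E.pA)))
            : Ah →ₗ[K] Ah) = LinearMap.id := by
          ext x
          simp only [LinearMap.coe_comp, Function.comp_apply, LinearMap.add_apply,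
            LinearMap.sub_apply, LinearMap.id_coe, id_eq, LinearMap.comp_apply,
            LinearEquiv.coe_coe, map_add, map_sub, hsA, hpAiB, hrsA, hriB,
            map_zero, add_zero, zero_add, LinearEquiv.apply_symm_apply,
            LinearEquiv.symm_apply_apply]
          rw [hr x]; abel
        have hc2 : ((sA ∘ₗ (α₁.symm : A →ₗ[K] A) ∘ₗ E.pA
              + E.iB ∘ₗ ((β₁.symm : B →ₗ[K] B) ∘ₗ (r - φB ∘ₗ E.pA))).comp
            (sA ∘ₗ (α₁ : A →ₗ[K] A) ∘ₗ E.pA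
              + E.iB ∘ₗ ((β₁ : B →ₗ[K] B) ∘ₗ r + φB ∘ₗ (α₁ : A →ₗ[K] A) ∘ₗ E.pA))
            : Ah →ₗ[K] Ah) = LinearMap.id := by
          ext x
          simp only [LinearMap.coe_comp, Function.comp_apply, LinearMap.add_apply,
            LinearMap.sub_apply, LinearMap.id_coe, id_eq, LinearMap.comp_apply,
            LinearEquiv.coe_coe, map_add, map_sub, hsA, hpAiB, hrsA, hriB,
            map_zero, add_zero, zero_add, LinearEquiv.apply_symm_apply,
            LinearEquiv.symm_apply_apply, add_sub_cancel_right]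
          rw [hr x]; abel
        exact ⟨LinearEquiv.ofLinear _ _ hc1 hc2, fun x => rfl⟩
      obtain ⟨γ₂, hγ₂⟩ : ∃ γ₂ : Vh ≃ₗ[K] Vh,
          ∀ v, γ₂ v = sV (α₂ (E.pV v)) + E.iM (β₂ (rV v) + φM (α₂ (E.pV v))) := by
        have hc1 : ((sV ∘ₗ (α₂ : V →ₗ[K] V) ∘ₗ E.pV
              + E.iM ∘ₗ ((β₂ : M →ₗ[K] M) ∘ₗ rV + φM ∘ₗ (α₂ : V →ₗ[K] V) ∘ₗ E.pV)).comp
            (sV ∘ₗ (α₂.symm : V →ₗ[K] V) ∘ₗ E.pV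
              + E.iM ∘ₗ ((β₂.symm : M →ₗ[K] M) ∘ₗ (rV - φM ∘ₗ E.pV)))
            : Vh →ₗ[K] Vh) = LinearMap.id := by
          ext v
          simp only [LinearMap.coe_comp, Function.comp_apply, LinearMap.add_apply,
            LinearMap.sub_apply, LinearMap.id_coe, id_eq, LinearMap.comp_apply,
            LinearEquiv.coe_coe, map_add, map_sub, hsV, hpViM, hrVsV, hrViM,
            map_zero, add_zero, zero_add, LinearEquiv.apply_symm_apply,
            LinearEquiv.symm_apply_apply]
          rw [hrV v]; abel
        have hc2 : ((sV ∘ₗ (α₂.symm : V →ₗ[K] V) ∘ₗ E.pV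
              + E.iM ∘ₗ ((β₂.symm : M →ₗ[K] M) ∘ₗ (rV - φM ∘ₗ E.pV))).comp
            (sV ∘ₗ (α₂ : V →ₗ[K] V) ∘ₗ E.pV
              + E.iM ∘ₗ ((β₂ : M →ₗ[K] M) ∘ₗ rV + φM ∘ₗ (α₂ : V →ₗ[K] V) ∘ₗ E.pV))
            : Vh →ₗ[K] Vh) = LinearMap.id := by
          ext v
          simp only [LinearMap.coe_comp, Function.comp_apply, LinearMap.add_apply,
            LinearMap.sub_apply, LinearMap.id_coe, id_eq, LinearMap.comp_apply,
            LinearEquiv.coe_coe, map_add, map_sub, hsV, hpViM, hrVsV, hrViM,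
            map_zero, add_zero, zero_add, LinearEquiv.apply_symm_apply,
            LinearEquiv.symm_apply_apply, add_sub_cancel_right]
          rw [hrV v]; abel
        exact ⟨LinearEquiv.ofLinear _ _ hc1 hc2, fun v => rfl⟩
      -- pointwise facts
      have hpAg : ∀ x, E.pA (γ₁ x) = α₁ (E.pA x) := by
        intro x; rw [hγ₁, map_add, hsA, hpAiB, add_zero]
      have hrg : ∀ x, r (γ₁ x) = β₁ (r x) + φB (α₁ (E.pA x)) := by
        intro x; rw [hγ₁, map_add, hrsA, hriB, zero_add]
      have hpVg : ∀ v, E.pV (γ₂ v) = α₂ (E.pV v) := by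
        intro v; rw [hγ₂, map_add, hsV, hpViM, add_zero]
      have hrVg : ∀ v, rV (γ₂ v) = β₂ (rV v) + φM (α₂ (E.pV v)) := by
        intro v; rw [hγ₂, map_add, hrVsV, hrViM, zero_add]
      have hg_sA : ∀ z, γ₁ (sA z) = sA (α₁ z) + E.iB (φB (α₁ z)) := by
        intro z; rw [hγ₁, hsA, hrsA, map_zero, zero_add]
      have hg_sV : ∀ w, γ₂ (sV w) = sV (α₂ w) + E.iM (φM (α₂ w)) := by
        intro w; rw [hγ₂, hsV, hrVsV, map_zero, zero_add]
      have hg_iB : ∀ c, γ₁ (E.iB c) = E.iB (β₁ c) := by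
        intro c
        rw [hγ₁, hpAiB, hriB]
        simp
      have hg_iM : ∀ m, γ₂ (E.iM m) = E.iM (β₂ m) := by
        intro m
        rw [hγ₂, hpViM, hrViM]
        simp
      refine ⟨γ₁, γ₂, ?_, ?_, ?_, hg_iB, hg_iM, ?_, ?_⟩
      · -- bracket
        intro x y
        rw [hbrformula x y, map_add, hg_sA, hg_iB, hbrformula (γ₁ x) (γ₁ y),
          hpAg, hpAg, hrg, hrg, hρBadd, hρBadd, hαbr]
        have h := h1 (α₁ (E.pA x)) (α₁ (E.pA y))
        simp only [LinearEquiv.symm_apply_apply] at h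
        rw [sub_eq_iff_eq_add] at h
        simp only [map_add, map_sub, map_neg, hC1, h]
        abel
      · -- T
        intro v
        rw [hTformula v, map_add, hg_sA, hg_iB, hTformula (γ₂ v), hpVg, hrVg, hαT]
        have h := h3 (α₂ (E.pV v))
        simp only [LinearEquiv.symm_apply_apply] at h
        rw [sub_eq_iff_eq_add] at h
        simp only [map_add, map_sub, map_neg, hβT, h]
        abel
      · -- rep
        intro x v
        rw [hrepformula x v, map_add, hg_sV, hg_iM, hrepformula (γ₁ x) (γ₂ v),
          hpAg, hpVg, hrg, hrVg, hρMadd, hμadd, hαrep]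
        have h := h2 (α₁ (E.pA x)) (α₂ (E.pV v))
        simp only [LinearEquiv.symm_apply_apply] at h
        rw [sub_eq_iff_eq_add] at h
        simp only [map_add, map_sub, map_neg, hC2, hC3, h]
        abel
      · intro x
        rw [hpAg, hsA]
      · intro v
        rw [hpVg, hsV]
  · -- Part 3a: Ker K → Z¹
    intro γ₁ γ₂ hk ζ η hζ hη
    obtain ⟨hkbr, hkT, hkrep, hkiB, hkiM, hkpA, hkpV⟩ := hk
    have hsdec : ∀ x, γ₁ (sA x) = sA x + E.iB (ζ x) := by intro x; rw [hζ]; abel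
    have hsdecV : ∀ v, γ₂ (sV v) = sV v + E.iM (η v) := by intro v; rw [hη]; abel
    refine ⟨?_, ?_, ?_⟩
    · intro x y
      have way1 : γ₁ (ℰ.br (sA x) (sA y))
          = (E.iB (ω x y) + sA (𝒜.br x y)) + E.iB (ζ (𝒜.br x y)) := by
        rw [hbrss, map_add, hkiB, hsdec]; abel
      have way2 : γ₁ (ℰ.br (sA x) (sA y))
          = (E.iB (ω x y) + sA (𝒜.br x y))
            + (E.iB (ρB x (ζ y)) - E.iB (ρB y (ζ x))) := by
        rw [hkbr, hsdec, hsdec, hbil, hbrss, ← hρB,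
          hskew (E.iB (ζ x)) (sA y), ← hρB, hiBbr0]
        abel
      have h2 := add_left_cancel (way1.symm.trans way2)
      apply E.iB_inj
      rw [map_sub, ← h2]
    · intro x v
      have way1 : γ₂ (ℰ.rep (sA x) (sV v))
          = (E.iM (ϖ x v) + sV (𝒜.rep x v)) + E.iM (η (𝒜.rep x v)) := by
        rw [hrepss, map_add, hkiM, hsdecV]; abel
      have way2 : γ₂ (ℰ.rep (sA x) (sV v))
          = (E.iM (ϖ x v) + sV (𝒜.rep x v))
            + (E.iM (ρM x (η v)) - E.iM (μ v (ζ x))) := by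
        rw [hkrep, hsdec, hsdecV, hbilrep, hrepss, ← hρM, hrepBs, hiBrep0]
        abel
      have h2 := add_left_cancel (way1.symm.trans way2)
      apply E.iM_inj
      rw [map_add, h2]; abel
    · intro v
      have way1 : γ₁ (ℰ.T (sV v))
          = (E.iB (χ v) + sA (𝒜.T v)) + E.iB (ζ (𝒜.T v)) := by
        rw [hTs, map_add, hkiB, hsdec]; abel
      have way2 : γ₁ (ℰ.T (sV v))
          = (E.iB (χ v) + sA (𝒜.T v)) + E.iB (ℬ.T (η v)) := by
        rw [hkT, hsdecV, map_add, hTs, ← E.iB_T]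
      exact E.iB_inj (add_left_cancel (way1.symm.trans way2))
  · -- Part 3b: injectivity
    intro γ₁ γ₂ γ₁' γ₂' hk hk' h1 h2
    obtain ⟨-, -, -, hkiB, hkiM, -, -⟩ := hk
    obtain ⟨-, -, -, hkiB', hkiM', -, -⟩ := hk'
    constructor
    · refine LinearEquiv.ext fun x => ?_
      conv_lhs => rw [hdec x]
      conv_rhs => rw [hdec x]
      rw [map_add, map_add, h1, hkiB, hkiB']
    · refine LinearEquiv.ext fun v => ?_
      conv_lhs => rw [hdecV v]
      conv_rhs => rw [hdecV v]
      rw [map_add, map_add, h2, hkiM, hkiM']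
  · -- Part 3c: surjectivity onto Z¹
    intro ζ η hz
    have hz1 : ∀ x y, ρB x (ζ y) - ρB y (ζ x) = ζ (𝒜.br x y) := hz.1
    have hz2 : ∀ x v, μ v (ζ x) + η (𝒜.rep x v) = ρM x (η v) := hz.2.1
    have hz3 : ∀ v, ζ (𝒜.T v) = ℬ.T (η v) := hz.2.2
    have hz2' : ∀ x v, η (𝒜.rep x v) = ρM x (η v) - μ v (ζ x) := by
      intro x v; rw [← hz2 x v]; abel
    obtain ⟨γ₁, hγ₁⟩ : ∃ γ₁ : Ah ≃ₗ[K] Ah, ∀ x, γ₁ x = x + E.iB (ζ (E.pA x)) := by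
      have hc1 : ((LinearMap.id + E.iB ∘ₗ ζ ∘ₗ E.pA).comp
          (LinearMap.id - E.iB ∘ₗ ζ ∘ₗ E.pA) : Ah →ₗ[K] Ah) = LinearMap.id := by
        ext x
        simp only [LinearMap.coe_comp, Function.comp_apply, LinearMap.add_apply,
          LinearMap.sub_apply, LinearMap.id_coe, id_eq, LinearMap.comp_apply,
          map_sub, map_add, hpAiB, map_zero, sub_zero, add_zero]
        abel
      have hc2 : ((LinearMap.id - E.iB ∘ₗ ζ ∘ₗ E.pA).comp
          (LinearMap.id + E.iB ∘ₗ ζ ∘ₗ E.pA) : Ah →ₗ[K] Ah) = LinearMap.id := by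
        ext x
        simp only [LinearMap.coe_comp, Function.comp_apply, LinearMap.add_apply,
          LinearMap.sub_apply, LinearMap.id_coe, id_eq, LinearMap.comp_apply,
          map_sub, map_add, hpAiB, map_zero, sub_zero, add_zero]
        abel
      exact ⟨LinearEquiv.ofLinear _ _ hc1 hc2, fun x => rfl⟩
    obtain ⟨γ₂, hγ₂⟩ : ∃ γ₂ : Vh ≃ₗ[K] Vh, ∀ v, γ₂ v = v + E.iM (η (E.pV v)) := by
      have hc1 : ((LinearMap.id + E.iM ∘ₗ η ∘ₗ E.pV).comp
          (LinearMap.id - E.iM ∘ₗ η ∘ₗ E.pV) : Vh →ₗ[K] Vh) = LinearMap.id := by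
        ext v
        simp only [LinearMap.coe_comp, Function.comp_apply, LinearMap.add_apply,
          LinearMap.sub_apply, LinearMap.id_coe, id_eq, LinearMap.comp_apply,
          map_sub, map_add, hpViM, map_zero, sub_zero, add_zero]
        abel
      have hc2 : ((LinearMap.id - E.iM ∘ₗ η ∘ₗ E.pV).comp
          (LinearMap.id + E.iM ∘ₗ η ∘ₗ E.pV) : Vh →ₗ[K] Vh) = LinearMap.id := by
        ext v
        simp only [LinearMap.coe_comp, Function.comp_apply, LinearMap.add_apply,
          LinearMap.sub_apply, LinearMap.id_coe, id_eq, LinearMap.comp_apply,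
          map_sub, map_add, hpViM, map_zero, sub_zero, add_zero]
        abel
      exact ⟨LinearEquiv.ofLinear _ _ hc1 hc2, fun v => rfl⟩
    refine ⟨γ₁, γ₂, ⟨?_, ?_, ?_, ?_, ?_, ?_, ?_⟩, ?_, ?_⟩
    · intro x y
      rw [hγ₁ (ℰ.br x y), hγ₁ x, hγ₁ y, hbil, hbrX, hbrX', hiBbr0, E.pA_br,
        ← hz1, map_sub]
      abel
    · intro v
      rw [hγ₁ (ℰ.T v), hγ₂ v, map_add, ← E.iB_T, E.p_T, hz3]
    · intro x v
      rw [hγ₂ (ℰ.rep x v), hγ₁ x, hγ₂ v, hbilrep, hrepXm, hrepBv, hiBrep0,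
        E.p_rep, hz2', map_sub]
      abel
    · intro a
      rw [hγ₁, hpAiB]
      simp
    · intro m
      rw [hγ₂, hpViM]
      simp
    · intro x
      rw [hγ₁, map_add, hsA, hpAiB, add_zero]
    · intro v
      rw [hγ₂, map_add, hsV, hpViM, add_zero]
    · intro x
      rw [hγ₁, hsA]; abel
    · intro v
      rw [hγ₂, hsV]; abel


end
end
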